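/- The generalized ZH-monoid is invariant under all permutations of its inputs: for every n ≥ 1 and every permutation σ of Fin n, Mₙ * P_σ = Mₙ, where P_σ : Matrix (Fin n → Fin 2) (Fin n → Fin 2) ℂ is the permutation matrix permuting the n tensor factors of (ℂ²)^⊗n according to σ (P_σ sends the basis vector e_x to e_{x ∘ σ⁻¹}). -/

import Mathlib

open Kronecker Matrix

/-- The ZH-monoid `M`, determined on the standard basis by
`M|00⟩ = |0⟩`, `M|01⟩ = |1⟩`, `M|10⟩ = |1⟩`, `M|11⟩ = 0`. -/
def ZHmonoid : Matrix (Fin 2) (Fin 2 × Fin 2) ℂ :=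
  Matrix.of fun i p =>
    if p = (0, 0) then ![1, 0] i
    else if p = (1, 1) then 0
    else ![0, 1] i

/-- The generalized ZH-monoid `Mₙ`, defined inductively by `M₁ = I₂` and
`M_{n+1} = M * (I₂ ⊗ₖ Mₙ)`, using the canonical identification of
`Fin 2 × (Fin n → Fin 2)` with `Fin (n+1) → Fin 2`. -/
noncomputable def genMonoid : (n : ℕ) → Matrix (Fin 2) (Fin n → Fin 2) ℂ
  | 0 => Matrix.of fun i _ => if i = 0 then 1 else 0
  | 1 => Matrix.reindex (Equiv.refl (Fin 2)) (Equiv.funUnique (Fin 1) (Fin 2)).symm 1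
  | (n + 2) =>
    Matrix.reindex (Equiv.refl (Fin 2)) (Fin.consEquiv fun _ => Fin 2)
      (ZHmonoid * ((1 : Matrix (Fin 2) (Fin 2) ℂ) ⊗ₖ genMonoid (n + 1)))
  termination_by n => n

/-- The permutation matrix `P_σ` permuting the `n` tensor factors of `(ℂ²)^⊗n`
according to `σ`: it sends the basis vector `e_x` to `e_{x ∘ σ⁻¹}`. -/
def permMatrix (n : ℕ) (σ : Equiv.Perm (Fin n)) :
    Matrix (Fin n → Fin 2) (Fin n → Fin 2) ℂ :=
  Matrix.of fun y x => if y = x ∘ ⇑σ⁻¹ then 1 else 0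

/-! `Mₙ` sends a basis vector `|x⟩` to `|w⟩` if the Hamming weight `w = ∑ⱼ xⱼ` of `x` is `0` or `1`,
and to `0` otherwise: each `M` adds the weights of its two inputs and kills weight `2`. The Hamming
weight does not change when the tensor factors are permuted. -/

lemma ZHmonoid_apply (i a b : Fin 2) :
    ZHmonoid i (a, b) = if (a + b : ℕ) = i then 1 else 0 := by
  fin_cases i <;> fin_cases a <;> fin_cases b <;> simp [ZHmonoid]

lemma genMonoid_succ_succ_apply (n : ℕ) (i : Fin 2) (x : Fin (n + 2) → Fin 2) :
    genMonoid (n + 2) i x = ∑ a, ZHmonoid i (x 0, a) * genMonoid (n + 1) a (Fin.tail x) := by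
  have hx : (Fin.consEquiv fun _ : Fin (n + 2) => Fin 2).symm x = (x 0, Fin.tail x) := by
    rw [Equiv.symm_apply_eq]
    exact (Fin.cons_self_tail x).symm
  rw [genMonoid, reindex_apply, submatrix_apply, hx, mul_apply, Fintype.sum_prod_type]
  simp [kroneckerMap_apply, one_apply]

lemma Fin.sum_two_ite_add_eq_mul_ite_eq {R : Type*} [Semiring R] (b i : Fin 2) (w : ℕ) :
    ∑ a : Fin 2, ((if (b + a : ℕ) = i then 1 else 0) * (if w = a then 1 else 0) : R) =
      if (b + w : ℕ) = i then 1 else 0 := by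
  fin_cases b <;> fin_cases i <;> simp [Fin.sum_univ_two]

theorem genMonoid_apply (n : ℕ) (i : Fin 2) (x : Fin n → Fin 2) :
    genMonoid n i x = if ∑ j, (x j : ℕ) = i then 1 else 0 := by
  induction n generalizing i with
  | zero => fin_cases i <;> simp [genMonoid]
  | succ n ih =>
    cases n with
    | zero =>
      rw [genMonoid]
      simp [one_apply, Fin.val_inj, eq_comm]
    | succ n =>
      simp only [genMonoid_succ_succ_apply, ZHmonoid_apply, ih,
        Fin.sum_univ_succ (f := fun j => (x j : ℕ))]
      exact Fin.sum_two_ite_add_eq_mul_ite_eq _ _ _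

lemma mul_permMatrix_apply {m : Type*} {n : ℕ} (A : Matrix m (Fin n → Fin 2) ℂ)
    (σ : Equiv.Perm (Fin n)) (i : m) (x : Fin n → Fin 2) :
    (A * permMatrix n σ) i x = A i (x ∘ ⇑σ⁻¹) := by
  simp [mul_apply, permMatrix]

theorem genMonoid_perm_invariant_general (n : ℕ) (σ : Equiv.Perm (Fin n)) :
    genMonoid n * permMatrix n σ = genMonoid n := by
  ext i x
  rw [mul_permMatrix_apply, genMonoid_apply, genMonoid_apply, Function.comp_def,
    Equiv.sum_comp σ⁻¹ fun j => (x j : ℕ)]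

/-- The generalized ZH-monoid is invariant under all permutations of its inputs:
for every `n ≥ 1` and every permutation `σ` of `Fin n`, `Mₙ * P_σ = Mₙ`. -/
theorem genMonoid_perm_invariant (n : ℕ) (hn : 1 ≤ n) (σ : Equiv.Perm (Fin n)) :
    genMonoid n * permMatrix n σ = genMonoid n :=
  genMonoid_perm_invariant_general n σ
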